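/- Let T₀ and T be n×n stochastic matrices, S a set of indices with T₀[S] stochastic, and T̃ = dnf(T[S]). Then ‖T̃ − T₀[S]‖_F ≤ ‖T − T₀‖_F and ‖T̃ − T₀[S]‖_∞ ≤ ‖T − T₀‖_∞. -/

import Mathlib

open Matrix BigOperators

/-- The dangling node fix of a square matrix: `dnf(A) = A + (1/n)(J - AJ)`,
where `J` is the all-ones matrix. -/
noncomputable def dnf {ι : Type*} [Fintype ι] (A : Matrix ι ι ℝ) : Matrix ι ι ℝ :=
  A + ((Fintype.card ι : ℝ)⁻¹) •
    ((Matrix.of fun _ _ => (1 : ℝ)) - A * Matrix.of fun _ _ => (1 : ℝ))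

/-- The Frobenius norm of a real matrix. -/
noncomputable def frobNorm {ι : Type*} [Fintype ι] (A : Matrix ι ι ℝ) : ℝ :=
  Real.sqrt (∑ i, ∑ j, A i j ^ 2)

/-- The maximum absolute row sum norm `‖·‖_∞` of a matrix. -/
noncomputable def infNorm {ι : Type*} [Fintype ι] (A : Matrix ι ι ℝ) : ℝ :=
  ⨆ i, ∑ j, |A i j|

/-!
Write `E = T - T₀`. Because `T₀[S]` is stochastic, the `(i, j)` entry of `T̃ - T₀[S]` is
`E i j - mean_{k ∈ S} E i k`: each row is the corresponding row of `E[S]`, centred on `S`.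
Centring never increases a sum of squares, which gives the Frobenius bound. For the row-sum
norm, the rows of `E` sum to zero, so the total of a row over `S` is minus its total outside `S`;
hence the `ℓ¹` cost `|S| · |mean|` of centring is paid for by the entries of the row outside `S`.
-/

open Finset

section Centering

variable {ι : Type*} (S : Finset ι) (f : ι → ℝ)

lemma sum_sub_mean_sq_le :
    ∑ j ∈ S, (f j - (#S : ℝ)⁻¹ * ∑ k ∈ S, f k) ^ 2 ≤ ∑ j ∈ S, f j ^ 2 := by
  set s := ∑ k ∈ S, f k
  set c := (#S : ℝ)⁻¹ * s
  have hc : #S * c ^ 2 = c * s := by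
    rcases eq_or_ne (#S : ℝ) 0 with h | h
    · simp [c, h]
    · simp only [c]; field_simp
  have hexpand : ∑ j ∈ S, (f j - c) ^ 2 = ∑ j ∈ S, f j ^ 2 - 2 * c * s + #S * c ^ 2 := by
    simp only [sub_sq, sum_add_distrib, sum_sub_distrib, sum_const, nsmul_eq_mul, s,
      ← sum_mul, ← mul_sum]
    ring
  have hcs : 0 ≤ c * s := by
    rw [mul_assoc]; exact mul_nonneg (by positivity) (mul_self_nonneg s)
  linarith

lemma card_mul_inv_card_mul_abs_le (s : ℝ) : #S * |(#S : ℝ)⁻¹ * s| ≤ |s| := by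
  rw [abs_mul, abs_of_nonneg (by positivity), ← mul_assoc]
  exact mul_le_of_le_one_left (abs_nonneg s) mul_inv_le_one

lemma sum_abs_sub_mean_le [Fintype ι] [DecidableEq ι] (hf : ∑ j, f j = 0) :
    ∑ j ∈ S, |f j - (#S : ℝ)⁻¹ * ∑ k ∈ S, f k| ≤ ∑ j, |f j| := by
  set s := ∑ k ∈ S, f k
  have hs : |s| ≤ ∑ j ∈ Sᶜ, |f j| := by
    have : s = -∑ j ∈ Sᶜ, f j := by linarith [sum_add_sum_compl S f]
    rw [this, abs_neg]
    exact abs_sum_le_sum_abs _ _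
  calc ∑ j ∈ S, |f j - (#S : ℝ)⁻¹ * s|
      ≤ ∑ j ∈ S, (|f j| + |(#S : ℝ)⁻¹ * s|) := sum_le_sum fun j _ => abs_sub _ _
    _ = ∑ j ∈ S, |f j| + #S * |(#S : ℝ)⁻¹ * s| := by
      rw [sum_add_distrib, sum_const, nsmul_eq_mul]
    _ ≤ ∑ j ∈ S, |f j| + ∑ j ∈ Sᶜ, |f j| := by
      linarith [card_mul_inv_card_mul_abs_le S s]
    _ = ∑ j, |f j| := sum_add_sum_compl S _

end Centering

lemma dnf_apply {ι : Type*} [Fintype ι] (A : Matrix ι ι ℝ) (i j : ι) :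
    dnf A i j = A i j + (Fintype.card ι : ℝ)⁻¹ * (1 - ∑ k, A i k) := by
  simp [dnf, Matrix.mul_apply]

lemma dnf_submatrix_sub_submatrix_apply {ι : Type*} (T₀ T : Matrix ι ι ℝ) (S : Finset ι)
    (hT₀S : ∀ i ∈ S, ∑ j ∈ S, T₀ i j = 1) (i j : S) :
    (dnf (T.submatrix (fun i : S => (i : ι)) (fun j : S => (j : ι))) -
        T₀.submatrix (fun i : S => (i : ι)) (fun j : S => (j : ι))) i j
      = (T - T₀) i j - (#S : ℝ)⁻¹ * ∑ k ∈ S, (T - T₀) i k := by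
  rw [Matrix.sub_apply, dnf_apply, Fintype.card_coe, ← hT₀S i i.2]
  simp only [Matrix.submatrix_apply, Matrix.sub_apply, sum_sub_distrib,
    sum_coe_sort S (T i ·)]
  ring

lemma frobNorm_submatrix_le_of_row_le {ι : Type*} [Fintype ι] (S : Finset ι)
    {A : Matrix S S ℝ} {B : Matrix ι ι ℝ} (h : ∀ i : S, ∑ j, A i j ^ 2 ≤ ∑ j, B i j ^ 2) :
    frobNorm A ≤ frobNorm B := by
  refine Real.sqrt_le_sqrt ?_
  calc ∑ i, ∑ j, A i j ^ 2 ≤ ∑ i : S, ∑ j, B i j ^ 2 := sum_le_sum fun i _ => h i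
    _ = ∑ i ∈ S, ∑ j, B i j ^ 2 := sum_coe_sort S fun i => ∑ j, B i j ^ 2
    _ ≤ ∑ i, ∑ j, B i j ^ 2 :=
      sum_le_univ_sum_of_nonneg fun i => sum_nonneg fun j _ => sq_nonneg _

lemma infNorm_nonneg {ι : Type*} [Fintype ι] (A : Matrix ι ι ℝ) : 0 ≤ infNorm A :=
  Real.iSup_nonneg fun _ => sum_nonneg fun _ _ => abs_nonneg _

lemma infNorm_le_of_row_le {κ ι : Type*} [Fintype κ] [Fintype ι] {A : Matrix κ κ ℝ}
    {B : Matrix ι ι ℝ} (e : κ → ι) (h : ∀ i, ∑ j, |A i j| ≤ ∑ j, |B (e i) j|) :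
    infNorm A ≤ infNorm B :=
  Real.iSup_le
    (fun i => (h i).trans <|
      le_ciSup (f := fun i => ∑ j, |B i j|) (Set.finite_range _).bddAbove (e i))
    (infNorm_nonneg B)

theorem stmt16_general {n : ℕ} (T₀ T : Matrix (Fin n) (Fin n) ℝ)
    (hT₀row : ∀ i, ∑ j, T₀ i j = 1)
    (hTrow : ∀ i, ∑ j, T i j = 1)
    (S : Finset (Fin n))
    (hT₀S : ∀ i ∈ S, ∑ j ∈ S, T₀ i j = 1) :
    frobNorm
        (dnf (T.submatrix (fun i : {x // x ∈ S} => (i : Fin n))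
            (fun j : {x // x ∈ S} => (j : Fin n))) -
          T₀.submatrix (fun i : {x // x ∈ S} => (i : Fin n))
            (fun j : {x // x ∈ S} => (j : Fin n)))
      ≤ frobNorm (T - T₀) ∧
    infNorm
        (dnf (T.submatrix (fun i : {x // x ∈ S} => (i : Fin n))
            (fun j : {x // x ∈ S} => (j : Fin n))) -
          T₀.submatrix (fun i : {x // x ∈ S} => (i : Fin n))
            (fun j : {x // x ∈ S} => (j : Fin n)))
      ≤ infNorm (T - T₀) := by
  have hE : ∀ i, ∑ j, (T - T₀) i j = 0 := fun i => by
    simp [Matrix.sub_apply, sum_sub_distrib, hTrow, hT₀row]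
  constructor
  · refine frobNorm_submatrix_le_of_row_le S fun i => ?_
    simp only [dnf_submatrix_sub_submatrix_apply T₀ T S hT₀S]
    exact (sum_coe_sort S _).trans_le <|
      (sum_sub_mean_sq_le S _).trans (sum_le_univ_sum_of_nonneg fun _ => sq_nonneg _)
  · refine infNorm_le_of_row_le (↑) fun i => ?_
    simp only [dnf_submatrix_sub_submatrix_apply T₀ T S hT₀S]
    exact (sum_coe_sort S _).trans_le (sum_abs_sub_mean_le S _ (hE i))

/-- If `T₀, T` are stochastic, `S` a set of indices with `T₀[S]` stochastic, and
`T̃ = dnf(T[S])`, then `‖T̃ - T₀[S]‖_F ≤ ‖T - T₀‖_F` and `‖T̃ - T₀[S]‖_∞ ≤ ‖T - T₀‖_∞`. -/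
theorem stmt16 {n : ℕ} (T₀ T : Matrix (Fin n) (Fin n) ℝ)
    (hT₀pos : ∀ i j, 0 ≤ T₀ i j) (hT₀row : ∀ i, ∑ j, T₀ i j = 1)
    (hTpos : ∀ i j, 0 ≤ T i j) (hTrow : ∀ i, ∑ j, T i j = 1)
    (S : Finset (Fin n)) (hS : S.Nonempty)
    (hT₀S : ∀ i ∈ S, ∑ j ∈ S, T₀ i j = 1) :
    frobNorm
        (dnf (T.submatrix (fun i : {x // x ∈ S} => (i : Fin n))
            (fun j : {x // x ∈ S} => (j : Fin n))) -
          T₀.submatrix (fun i : {x // x ∈ S} => (i : Fin n))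
            (fun j : {x // x ∈ S} => (j : Fin n)))
      ≤ frobNorm (T - T₀) ∧
    infNorm
        (dnf (T.submatrix (fun i : {x // x ∈ S} => (i : Fin n))
            (fun j : {x // x ∈ S} => (j : Fin n))) -
          T₀.submatrix (fun i : {x // x ∈ S} => (i : Fin n))
            (fun j : {x // x ∈ S} => (j : Fin n)))
      ≤ infNorm (T - T₀) :=
  stmt16_general T₀ T hT₀row hTrow S hT₀S
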